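/- If u1, u2, u3 are differentiable functions satisfying the Halphen system u_i' = u_i(u_j + u_k) - u_j u_k (for {i,j,k} = {1,2,3}), and A = [[a,b],[c,d]] ∈ SL(2,ℂ), then v_i(z) := (cz+d)^{-2}u_i((az+b)/(cz+d)) - c(cz+d)^{-1}, i = 1,2,3, also satisfy the Halphen system on the domain where cz+d ≠ 0. -/

import Mathlib

/-!
Write `p = (cz+d)⁻²` and `q = c(cz+d)⁻¹`, so that `vᵢ = p · (uᵢ ∘ A) - q`. Since `A' = p` (this is
where `ad - bc = 1` enters), `p' = -2pq` and `q' = -q²`, the chain rule gives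
`vᵢ' = p² uᵢ'(Az) - 2pq uᵢ(Az) + q²`. On the other hand the Halphen vector field `x (y + w) - y w`
turns, under the substitution `x ↦ px - q` in all three variables, into
`p² (x (y + w) - y w) - 2pq x + q²`: the terms linear in `y` and `w` cancel. So the Halphen equation
for `uᵢ` at `Az` is exactly the one for `vᵢ` at `z`.
-/

def halphenRhs {R : Type*} [CommRing R] (x y w : R) : R :=
  x * (y + w) - y * w

theorem halphenRhs_affine {R : Type*} [CommRing R] (p q x y w : R) :
    halphenRhs (p * x - q) (p * y - q) (p * w - q) =
      p ^ 2 * halphenRhs x y w - 2 * p * q * x + q ^ 2 := by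
  unfold halphenRhs
  ring

section HalphenTransform

variable {𝕜 : Type*} [NontriviallyNormedField 𝕜] {a b c d z : 𝕜}

theorem hasDerivAt_affine (c d z : 𝕜) : HasDerivAt (fun w => c * w + d) c z := by
  simpa using ((hasDerivAt_id z).const_mul c).add_const d

theorem hasDerivAt_moebius (hdet : a * d - b * c = 1) (hz : c * z + d ≠ 0) :
    HasDerivAt (fun w => (a * w + b) / (c * w + d)) ((c * z + d) ^ 2)⁻¹ z := by
  refine ((hasDerivAt_affine a b z).div (hasDerivAt_affine c d z) hz).congr_deriv ?_
  rw [show a * (c * z + d) - (a * z + b) * c = 1 by linear_combination hdet, one_div]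

def halphenTransform (a b c d : 𝕜) (u : 𝕜 → 𝕜) (w : 𝕜) : 𝕜 :=
  ((c * w + d) ^ 2)⁻¹ * u ((a * w + b) / (c * w + d)) - c * (c * w + d)⁻¹

theorem hasDerivAt_halphenTransform {u : 𝕜 → 𝕜} {u' : 𝕜} (hdet : a * d - b * c = 1)
    (hz : c * z + d ≠ 0) (hu : HasDerivAt u u' ((a * z + b) / (c * z + d))) :
    HasDerivAt (halphenTransform a b c d u)
      (((c * z + d) ^ 2)⁻¹ ^ 2 * u' - 2 * ((c * z + d) ^ 2)⁻¹ * (c * (c * z + d)⁻¹)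
        * u ((a * z + b) / (c * z + d)) + (c * (c * z + d)⁻¹) ^ 2) z := by
  have hp : HasDerivAt (fun w => ((c * w + d) ^ 2)⁻¹)
      (-2 * ((c * z + d) ^ 2)⁻¹ * (c * (c * z + d)⁻¹)) z := by
    refine (((hasDerivAt_affine c d z).fun_pow 2).inv (pow_ne_zero 2 hz)).congr_deriv ?_
    field_simp
    ring
  have hq : HasDerivAt (fun w => c * (c * w + d)⁻¹) (-(c * (c * z + d)⁻¹) ^ 2) z := by
    refine (((hasDerivAt_affine c d z).inv hz).const_mul c).congr_deriv ?_
    field_simp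
  refine ((hp.mul (hu.comp z (hasDerivAt_moebius hdet hz))).sub hq).congr_deriv ?_
  rw [Function.comp_apply]
  ring

theorem hasDerivAt_halphenTransform_of_halphen {u v w : 𝕜 → 𝕜} (hdet : a * d - b * c = 1)
    (hz : c * z + d ≠ 0)
    (hu : HasDerivAt u (halphenRhs (u ((a * z + b) / (c * z + d)))
      (v ((a * z + b) / (c * z + d))) (w ((a * z + b) / (c * z + d)))) ((a * z + b) / (c * z + d))) :
    HasDerivAt (halphenTransform a b c d u)
      (halphenRhs (halphenTransform a b c d u z) (halphenTransform a b c d v z)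
        (halphenTransform a b c d w z)) z :=
  (hasDerivAt_halphenTransform hdet hz hu).congr_deriv (halphenRhs_affine _ _ _ _ _).symm

end HalphenTransform

theorem halphen_sl2_invariance_general (a b c d : ℂ) (hdet : a * d - b * c = 1)
    (U : Set ℂ) (u1 u2 u3 : ℂ → ℂ)
    (h1 : ∀ w ∈ U, HasDerivAt u1 (u1 w * (u2 w + u3 w) - u2 w * u3 w) w)
    (h2 : ∀ w ∈ U, HasDerivAt u2 (u2 w * (u1 w + u3 w) - u1 w * u3 w) w)
    (h3 : ∀ w ∈ U, HasDerivAt u3 (u3 w * (u1 w + u2 w) - u1 w * u2 w) w)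
    (z : ℂ) (hz : c * z + d ≠ 0) (hzU : (a * z + b) / (c * z + d) ∈ U) :
    HasDerivAt (fun w => ((c * w + d) ^ 2)⁻¹ * u1 ((a * w + b) / (c * w + d))
        - c * (c * w + d)⁻¹)
      ((((c * z + d) ^ 2)⁻¹ * u1 ((a * z + b) / (c * z + d)) - c * (c * z + d)⁻¹)
          * ((((c * z + d) ^ 2)⁻¹ * u2 ((a * z + b) / (c * z + d)) - c * (c * z + d)⁻¹)
            + (((c * z + d) ^ 2)⁻¹ * u3 ((a * z + b) / (c * z + d)) - c * (c * z + d)⁻¹))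
        - (((c * z + d) ^ 2)⁻¹ * u2 ((a * z + b) / (c * z + d)) - c * (c * z + d)⁻¹)
          * (((c * z + d) ^ 2)⁻¹ * u3 ((a * z + b) / (c * z + d)) - c * (c * z + d)⁻¹)) z ∧
    HasDerivAt (fun w => ((c * w + d) ^ 2)⁻¹ * u2 ((a * w + b) / (c * w + d))
        - c * (c * w + d)⁻¹)
      ((((c * z + d) ^ 2)⁻¹ * u2 ((a * z + b) / (c * z + d)) - c * (c * z + d)⁻¹)
          * ((((c * z + d) ^ 2)⁻¹ * u1 ((a * z + b) / (c * z + d)) - c * (c * z + d)⁻¹)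
            + (((c * z + d) ^ 2)⁻¹ * u3 ((a * z + b) / (c * z + d)) - c * (c * z + d)⁻¹))
        - (((c * z + d) ^ 2)⁻¹ * u1 ((a * z + b) / (c * z + d)) - c * (c * z + d)⁻¹)
          * (((c * z + d) ^ 2)⁻¹ * u3 ((a * z + b) / (c * z + d)) - c * (c * z + d)⁻¹)) z ∧
    HasDerivAt (fun w => ((c * w + d) ^ 2)⁻¹ * u3 ((a * w + b) / (c * w + d))
        - c * (c * w + d)⁻¹)
      ((((c * z + d) ^ 2)⁻¹ * u3 ((a * z + b) / (c * z + d)) - c * (c * z + d)⁻¹)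
          * ((((c * z + d) ^ 2)⁻¹ * u1 ((a * z + b) / (c * z + d)) - c * (c * z + d)⁻¹)
            + (((c * z + d) ^ 2)⁻¹ * u2 ((a * z + b) / (c * z + d)) - c * (c * z + d)⁻¹))
        - (((c * z + d) ^ 2)⁻¹ * u1 ((a * z + b) / (c * z + d)) - c * (c * z + d)⁻¹)
          * (((c * z + d) ^ 2)⁻¹ * u2 ((a * z + b) / (c * z + d)) - c * (c * z + d)⁻¹)) z := by
  exact ⟨hasDerivAt_halphenTransform_of_halphen hdet hz (h1 _ hzU),
    hasDerivAt_halphenTransform_of_halphen hdet hz (h2 _ hzU),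
    hasDerivAt_halphenTransform_of_halphen hdet hz (h3 _ hzU)⟩

/-- If `(u1,u2,u3)` is a holomorphic solution of the Halphen system on an open set `U`, and
`A = [[a,b],[c,d]] ∈ SL(2,ℂ)`, then `v_i(z) = (cz+d)⁻²u_i(Az) - c(cz+d)⁻¹`, `i = 1,2,3`, also
satisfy the Halphen system on the domain where `cz+d ≠ 0` (and `Az = (az+b)/(cz+d) ∈ U`). -/
theorem halphen_sl2_invariance (a b c d : ℂ) (hdet : a * d - b * c = 1)
    (U : Set ℂ) (hU : IsOpen U) (u1 u2 u3 : ℂ → ℂ)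
    (h1 : ∀ w ∈ U, HasDerivAt u1 (u1 w * (u2 w + u3 w) - u2 w * u3 w) w)
    (h2 : ∀ w ∈ U, HasDerivAt u2 (u2 w * (u1 w + u3 w) - u1 w * u3 w) w)
    (h3 : ∀ w ∈ U, HasDerivAt u3 (u3 w * (u1 w + u2 w) - u1 w * u2 w) w)
    (z : ℂ) (hz : c * z + d ≠ 0) (hzU : (a * z + b) / (c * z + d) ∈ U) :
    HasDerivAt (fun w => ((c * w + d) ^ 2)⁻¹ * u1 ((a * w + b) / (c * w + d))
        - c * (c * w + d)⁻¹)
      ((((c * z + d) ^ 2)⁻¹ * u1 ((a * z + b) / (c * z + d)) - c * (c * z + d)⁻¹)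
          * ((((c * z + d) ^ 2)⁻¹ * u2 ((a * z + b) / (c * z + d)) - c * (c * z + d)⁻¹)
            + (((c * z + d) ^ 2)⁻¹ * u3 ((a * z + b) / (c * z + d)) - c * (c * z + d)⁻¹))
        - (((c * z + d) ^ 2)⁻¹ * u2 ((a * z + b) / (c * z + d)) - c * (c * z + d)⁻¹)
          * (((c * z + d) ^ 2)⁻¹ * u3 ((a * z + b) / (c * z + d)) - c * (c * z + d)⁻¹)) z ∧
    HasDerivAt (fun w => ((c * w + d) ^ 2)⁻¹ * u2 ((a * w + b) / (c * w + d))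
        - c * (c * w + d)⁻¹)
      ((((c * z + d) ^ 2)⁻¹ * u2 ((a * z + b) / (c * z + d)) - c * (c * z + d)⁻¹)
          * ((((c * z + d) ^ 2)⁻¹ * u1 ((a * z + b) / (c * z + d)) - c * (c * z + d)⁻¹)
            + (((c * z + d) ^ 2)⁻¹ * u3 ((a * z + b) / (c * z + d)) - c * (c * z + d)⁻¹))
        - (((c * z + d) ^ 2)⁻¹ * u1 ((a * z + b) / (c * z + d)) - c * (c * z + d)⁻¹)
          * (((c * z + d) ^ 2)⁻¹ * u3 ((a * z + b) / (c * z + d)) - c * (c * z + d)⁻¹)) z ∧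
    HasDerivAt (fun w => ((c * w + d) ^ 2)⁻¹ * u3 ((a * w + b) / (c * w + d))
        - c * (c * w + d)⁻¹)
      ((((c * z + d) ^ 2)⁻¹ * u3 ((a * z + b) / (c * z + d)) - c * (c * z + d)⁻¹)
          * ((((c * z + d) ^ 2)⁻¹ * u1 ((a * z + b) / (c * z + d)) - c * (c * z + d)⁻¹)
            + (((c * z + d) ^ 2)⁻¹ * u2 ((a * z + b) / (c * z + d)) - c * (c * z + d)⁻¹))
        - (((c * z + d) ^ 2)⁻¹ * u1 ((a * z + b) / (c * z + d)) - c * (c * z + d)⁻¹)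
          * (((c * z + d) ^ 2)⁻¹ * u2 ((a * z + b) / (c * z + d)) - c * (c * z + d)⁻¹)) z :=
  halphen_sl2_invariance_general a b c d hdet U u1 u2 u3 h1 h2 h3 z hz hzU
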